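/- Constant barrier bounds (Lemma 3.10): Suppose |t| ≠ 1. For d > 0 define M_{d,+} = [(2η² d^{−2q} + κ(μ d^{−q} + γ + 1)²)/(κ(t + 1)²)]^{1/(2q)} and M_{d,−} = [(2η² d^{−2q} + κ(μ d^{−q} + γ − 1)²)/(κ(t − 1)²)]^{1/(2q)}, and set m_d = min(M_{d,+}, M_{d,−}) and M_d = max(M_{d,+}, M_{d,−}). Then every solution ψ of the model Lichnerowicz equation L_d satisfies m_d ≤ ψ(x) ≤ M_d for all x ∈ ℝ. -/

import Mathlib

/-!
Off the multiples of `π` the equation says `A ψ'' = κ (t + λ)² ψ^(q-1) - E_λ ψ^(-q-1)` with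
`A > 0`, so `ψ''` has the sign of `ψ - M_λ`, where `M_λ = (E_λ / (κ (t + λ)²))^(1/(2q))` is the
constant solution for frozen `λ = ±1`. The periodic function `ψ` attains a global maximum; if it
exceeded `max M_±`, then `ψ'' > 0` just to the right of it and, as `ψ' = 0` there, `ψ` would
strictly increase. The minimum is handled symmetrically.
-/

open Real Filter

/-- The 2π-periodic function equal to −1 on (−π,0) and 1 on (0,π). -/
noncomputable def lam (x : ℝ) : ℝ := if 0 < Real.sin x then 1 else -1

/-- The critical exponent q = 2n/(n−2). -/
noncomputable def qex (n : ℕ) : ℝ := 2 * n / ((n : ℝ) - 2)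

/-- The coupling constant κ = (n−1)/n. -/
noncomputable def kap (n : ℕ) : ℝ := ((n : ℝ) - 1) / n

/-- A solution of the model Lichnerowicz equation `L_d` with parameters t, γ, η, μ:
a 2π-periodic, positive, C¹ function, twice differentiable off the multiples of π,
satisfying the equation there. -/
def IsModelSolution (n : ℕ) (t γ η μ d : ℝ) (ψ : ℝ → ℝ) : Prop :=
  (∀ x, ψ (x + 2 * Real.pi) = ψ x) ∧
  (∀ x, 0 < ψ x) ∧
  ContDiff ℝ 1 ψ ∧
  ∀ x : ℝ, (∀ k : ℤ, x ≠ (k : ℝ) * Real.pi) →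
    DifferentiableAt ℝ (deriv ψ) x ∧
    -2 * kap n * qex n * d ^ (-(qex n - 2)) * deriv (deriv ψ) x
      - 2 * η ^ 2 * d ^ (-(2 * qex n)) * ψ x ^ (-qex n - 1)
      - kap n * (μ * d ^ (-qex n) + γ + lam x) ^ 2 * ψ x ^ (-qex n - 1)
      + kap n * (t + lam x) ^ 2 * ψ x ^ (qex n - 1) = 0

open Set Topology

section

variable {α : Type*} [LinearOrder α] [TopologicalSpace α] [OrderClosedTopology α]

theorem Function.Periodic.exists_forall_ge_of_continuous {f : ℝ → α} {c : ℝ}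
    (hp : Function.Periodic f c) (hc : c ≠ 0) (hf : Continuous f) : ∃ a, ∀ x, f x ≤ f a := by
  obtain ⟨_, ⟨a, rfl⟩, ha⟩ :=
    (hp.compact_of_continuous hc hf).exists_isGreatest (range_nonempty f)
  exact ⟨a, fun x => ha (mem_range_self x)⟩

theorem Function.Periodic.exists_forall_le_of_continuous {f : ℝ → α} {c : ℝ}
    (hp : Function.Periodic f c) (hc : c ≠ 0) (hf : Continuous f) : ∃ a, ∀ x, f a ≤ f x := by
  obtain ⟨_, ⟨a, rfl⟩, ha⟩ :=
    (hp.compact_of_continuous hc hf).exists_isLeast (range_nonempty f)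
  exact ⟨a, fun x => ha (mem_range_self x)⟩

end

theorem not_isLocalMax_of_eventually_deriv_deriv_pos {f : ℝ → ℝ} {a : ℝ} (hf : ContDiff ℝ 1 f)
    (h : ∀ᶠ x in 𝓝[>] a, 0 < deriv (deriv f) x) : ¬ IsLocalMax f a := by
  intro hmax
  obtain ⟨b, hab, hb⟩ :=
    mem_nhdsGT_iff_exists_Ioo_subset.mp (h.and (nhdsWithin_le_nhds hmax))
  have ha : a ∈ Icc a b := left_mem_Icc.2 hab.le
  have hf' : StrictMonoOn (deriv f) (Icc a b) :=
    strictMonoOn_of_deriv_pos (convex_Icc a b) (hf.continuous_deriv le_rfl).continuousOn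
      (by rw [interior_Icc]; exact fun x hx => (hb hx).1)
  have hf : StrictMonoOn f (Icc a b) := by
    refine strictMonoOn_of_deriv_pos (convex_Icc a b) hf.continuous.continuousOn ?_
    rw [interior_Icc]
    intro x hx
    simpa [hmax.deriv_eq_zero] using hf' ha (Ioo_subset_Icc_self hx) hx.1
  have hmid : (a + b) / 2 ∈ Ioo a b := ⟨by linarith [hab.out], by linarith [hab.out]⟩
  exact (hf ha (Ioo_subset_Icc_self hmid) hmid.1).not_ge (hb hmid).2

theorem not_isLocalMin_of_eventually_deriv_deriv_neg {f : ℝ → ℝ} {a : ℝ} (hf : ContDiff ℝ 1 f)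
    (h : ∀ᶠ x in 𝓝[>] a, deriv (deriv f) x < 0) : ¬ IsLocalMin f a := fun hmin =>
  not_isLocalMax_of_eventually_deriv_deriv_pos hf.neg (by simpa using h) hmin.neg

theorem eventually_nhdsGT_ne_int_mul {p : ℝ} (hp : 0 < p) (a : ℝ) :
    ∀ᶠ x in 𝓝[>] a, ∀ k : ℤ, x ≠ k * p := by
  have hlt : a < (⌊a / p⌋ + 1) * p := by
    rw [← div_lt_iff₀ hp]; exact Int.lt_floor_add_one _
  filter_upwards [Ioo_mem_nhdsGT hlt] with x hx k rfl
  have hfl : ⌊a / p⌋ * p ≤ a := by rw [← le_div_iff₀ hp]; exact Int.floor_le _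
  have hk₁ : (⌊a / p⌋ : ℝ) < k := lt_of_mul_lt_mul_right (hfl.trans_lt hx.1) hp.le
  have hk₂ : (k : ℝ) < ⌊a / p⌋ + 1 := lt_of_mul_lt_mul_right hx.2 hp.le
  norm_cast at hk₁ hk₂
  omega

theorem root_div_lt_iff {q E C u : ℝ} (hq : 0 < q) (hE : 0 ≤ E) (hC : 0 < C) (hu : 0 < u) :
    (E / C) ^ (1 / (2 * q)) < u ↔ E * u ^ (-q - 1) < C * u ^ (q - 1) := by
  have hsplit : u ^ (q - 1) = u ^ (2 * q) * u ^ (-q - 1) := by rw [← rpow_add hu]; ring_nf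
  rw [one_div, rpow_inv_lt_iff_of_pos (div_nonneg hE hC.le) hu.le (by positivity),
    div_lt_iff₀ hC, hsplit, ← mul_assoc, mul_lt_mul_iff_left₀ (rpow_pos_of_pos hu _), mul_comm]

theorem lt_root_div_iff {q E C u : ℝ} (hq : 0 < q) (hE : 0 ≤ E) (hC : 0 < C) (hu : 0 < u) :
    u < (E / C) ^ (1 / (2 * q)) ↔ C * u ^ (q - 1) < E * u ^ (-q - 1) := by
  have hsplit : u ^ (q - 1) = u ^ (2 * q) * u ^ (-q - 1) := by rw [← rpow_add hu]; ring_nf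
  rw [one_div, lt_rpow_inv_iff_of_pos hu.le (div_nonneg hE hC.le) (by positivity),
    lt_div_iff₀ hC, hsplit, ← mul_assoc, mul_lt_mul_iff_left₀ (rpow_pos_of_pos hu _), mul_comm]

theorem qex_pos {n : ℕ} (hn : 3 ≤ n) : 0 < qex n := by
  have : (3 : ℝ) ≤ n := by exact_mod_cast hn
  unfold qex; exact div_pos (by linarith) (by linarith)

theorem kap_pos {n : ℕ} (hn : 3 ≤ n) : 0 < kap n := by
  have : (3 : ℝ) ≤ n := by exact_mod_cast hn
  unfold kap; exact div_pos (by linarith) (by linarith)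

theorem lam_eq_one_or_eq_neg_one (x : ℝ) : lam x = 1 ∨ lam x = -1 := by
  unfold lam; split_ifs <;> simp

theorem add_lam_ne_zero {t : ℝ} (ht : |t| ≠ 1) (x : ℝ) : t + lam x ≠ 0 := by
  rcases lam_eq_one_or_eq_neg_one x with h | h <;> rw [h] <;> intro h' <;> apply ht
  · rw [show t = -1 by linarith, abs_neg, abs_one]
  · rw [show t = 1 by linarith, abs_one]

/-- `barrier n t γ η μ d s` is the positive constant solving `L_d` with `λ` frozen to `s`;
`s = 1` and `s = -1` give the paper's `M_{d,+}` and `M_{d,-}`. -/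
noncomputable def barrier (n : ℕ) (t γ η μ d s : ℝ) : ℝ :=
  ((2 * η ^ 2 * d ^ (-(2 * qex n)) + kap n * (μ * d ^ (-qex n) + γ + s) ^ 2) /
    (kap n * (t + s) ^ 2)) ^ (1 / (2 * qex n))

theorem min_barrier_le_barrier_lam (n : ℕ) (t γ η μ d x : ℝ) :
    min (barrier n t γ η μ d 1) (barrier n t γ η μ d (-1)) ≤ barrier n t γ η μ d (lam x) := by
  rcases lam_eq_one_or_eq_neg_one x with h | h <;> rw [h]
  exacts [min_le_left _ _, min_le_right _ _]

theorem barrier_lam_le_max_barrier (n : ℕ) (t γ η μ d x : ℝ) :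
    barrier n t γ η μ d (lam x) ≤ max (barrier n t γ η μ d 1) (barrier n t γ η μ d (-1)) := by
  rcases lam_eq_one_or_eq_neg_one x with h | h <;> rw [h]
  exacts [le_max_left _ _, le_max_right _ _]

namespace IsModelSolution

variable {n : ℕ} {t γ η μ d : ℝ} {ψ : ℝ → ℝ}

theorem periodic (hψ : IsModelSolution n t γ η μ d ψ) : Function.Periodic ψ (2 * π) := hψ.1

theorem pos (hψ : IsModelSolution n t γ η μ d ψ) (x : ℝ) : 0 < ψ x := hψ.2.1 x

theorem contDiff (hψ : IsModelSolution n t γ η μ d ψ) : ContDiff ℝ 1 ψ := hψ.2.2.1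

theorem mul_deriv_deriv_eq (hψ : IsModelSolution n t γ η μ d ψ) {x : ℝ}
    (hx : ∀ k : ℤ, x ≠ k * π) :
    2 * kap n * qex n * d ^ (-(qex n - 2)) * deriv (deriv ψ) x =
      kap n * (t + lam x) ^ 2 * ψ x ^ (qex n - 1) -
        (2 * η ^ 2 * d ^ (-(2 * qex n)) + kap n * (μ * d ^ (-qex n) + γ + lam x) ^ 2) *
          ψ x ^ (-qex n - 1) := by
  linear_combination -(hψ.2.2.2 x hx).2

theorem deriv_deriv_pos_iff (hψ : IsModelSolution n t γ η μ d ψ) (hn : 3 ≤ n) (hd : 0 < d)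
    (ht : |t| ≠ 1) {x : ℝ} (hx : ∀ k : ℤ, x ≠ k * π) :
    0 < deriv (deriv ψ) x ↔ barrier n t γ η μ d (lam x) < ψ x := by
  have hκ := kap_pos hn
  have hq := qex_pos hn
  have hts := add_lam_ne_zero ht x
  have hA : 0 < 2 * kap n * qex n * d ^ (-(qex n - 2)) := by positivity
  rw [← mul_lt_mul_iff_right₀ hA, mul_zero, hψ.mul_deriv_deriv_eq hx, sub_pos, barrier,
    root_div_lt_iff hq (by positivity) (by positivity) (hψ.pos x)]

theorem deriv_deriv_neg_iff (hψ : IsModelSolution n t γ η μ d ψ) (hn : 3 ≤ n) (hd : 0 < d)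
    (ht : |t| ≠ 1) {x : ℝ} (hx : ∀ k : ℤ, x ≠ k * π) :
    deriv (deriv ψ) x < 0 ↔ ψ x < barrier n t γ η μ d (lam x) := by
  have hκ := kap_pos hn
  have hq := qex_pos hn
  have hts := add_lam_ne_zero ht x
  have hA : 0 < 2 * kap n * qex n * d ^ (-(qex n - 2)) := by positivity
  rw [← mul_lt_mul_iff_right₀ hA, mul_zero, hψ.mul_deriv_deriv_eq hx, sub_neg, barrier,
    lt_root_div_iff hq (by positivity) (by positivity) (hψ.pos x)]

theorem le_max_barrier (hψ : IsModelSolution n t γ η μ d ψ) (hn : 3 ≤ n) (hd : 0 < d)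
    (ht : |t| ≠ 1) (x : ℝ) :
    ψ x ≤ max (barrier n t γ η μ d 1) (barrier n t γ η μ d (-1)) := by
  obtain ⟨a, ha⟩ := Function.Periodic.exists_forall_ge_of_continuous hψ.periodic
    (by positivity) hψ.contDiff.continuous
  refine (ha x).trans (not_lt.mp fun hlt => ?_)
  refine not_isLocalMax_of_eventually_deriv_deriv_pos hψ.contDiff ?_ (Eventually.of_forall ha)
  filter_upwards [eventually_nhdsGT_ne_int_mul pi_pos a,
    nhdsWithin_le_nhds (hψ.contDiff.continuous.continuousAt.eventually (lt_mem_nhds hlt))]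
    with y hy hψy
  exact (hψ.deriv_deriv_pos_iff hn hd ht hy).2 ((barrier_lam_le_max_barrier ..).trans_lt hψy)

theorem min_barrier_le (hψ : IsModelSolution n t γ η μ d ψ) (hn : 3 ≤ n) (hd : 0 < d)
    (ht : |t| ≠ 1) (x : ℝ) :
    min (barrier n t γ η μ d 1) (barrier n t γ η μ d (-1)) ≤ ψ x := by
  obtain ⟨a, ha⟩ := Function.Periodic.exists_forall_le_of_continuous hψ.periodic
    (by positivity) hψ.contDiff.continuous
  refine (not_lt.mp fun hlt => ?_).trans (ha x)
  refine not_isLocalMin_of_eventually_deriv_deriv_neg hψ.contDiff ?_ (Eventually.of_forall ha)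
  filter_upwards [eventually_nhdsGT_ne_int_mul pi_pos a,
    nhdsWithin_le_nhds (hψ.contDiff.continuous.continuousAt.eventually (gt_mem_nhds hlt))]
    with y hy hψy
  exact (hψ.deriv_deriv_neg_iff hn hd ht hy).2 (hψy.trans_le (min_barrier_le_barrier_lam ..))

end IsModelSolution

theorem constant_barriers_general (n : ℕ) (hn : 3 ≤ n) (t γ η μ : ℝ)
    (ht : |t| ≠ 1) (d : ℝ) (hd : 0 < d)
    (ψ : ℝ → ℝ) (hψ : IsModelSolution n t γ η μ d ψ) :
    ∀ x : ℝ,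
      min (((2 * η ^ 2 * d ^ (-(2 * qex n)) + kap n * (μ * d ^ (-qex n) + γ + 1) ^ 2) /
              (kap n * (t + 1) ^ 2)) ^ (1 / (2 * qex n)))
          (((2 * η ^ 2 * d ^ (-(2 * qex n)) + kap n * (μ * d ^ (-qex n) + γ - 1) ^ 2) /
              (kap n * (t - 1) ^ 2)) ^ (1 / (2 * qex n))) ≤ ψ x ∧
      ψ x ≤
        max (((2 * η ^ 2 * d ^ (-(2 * qex n)) + kap n * (μ * d ^ (-qex n) + γ + 1) ^ 2) /
                (kap n * (t + 1) ^ 2)) ^ (1 / (2 * qex n)))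
            (((2 * η ^ 2 * d ^ (-(2 * qex n)) + kap n * (μ * d ^ (-qex n) + γ - 1) ^ 2) /
                (kap n * (t - 1) ^ 2)) ^ (1 / (2 * qex n))) := by
  intro x
  simp only [sub_eq_add_neg]
  exact ⟨hψ.min_barrier_le hn hd ht x, hψ.le_max_barrier hn hd ht x⟩

/-- Constant barrier bounds (Lemma 3.10). -/
theorem constant_barriers (n : ℕ) (hn : 3 ≤ n) (t γ η μ : ℝ)
    (hγ : -1 < γ ∧ γ < 1) (ht : |t| ≠ 1) (d : ℝ) (hd : 0 < d)
    (ψ : ℝ → ℝ) (hψ : IsModelSolution n t γ η μ d ψ) :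
    ∀ x : ℝ,
      min (((2 * η ^ 2 * d ^ (-(2 * qex n)) + kap n * (μ * d ^ (-qex n) + γ + 1) ^ 2) /
              (kap n * (t + 1) ^ 2)) ^ (1 / (2 * qex n)))
          (((2 * η ^ 2 * d ^ (-(2 * qex n)) + kap n * (μ * d ^ (-qex n) + γ - 1) ^ 2) /
              (kap n * (t - 1) ^ 2)) ^ (1 / (2 * qex n))) ≤ ψ x ∧
      ψ x ≤
        max (((2 * η ^ 2 * d ^ (-(2 * qex n)) + kap n * (μ * d ^ (-qex n) + γ + 1) ^ 2) /
                (kap n * (t + 1) ^ 2)) ^ (1 / (2 * qex n)))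
            (((2 * η ^ 2 * d ^ (-(2 * qex n)) + kap n * (μ * d ^ (-qex n) + γ - 1) ^ 2) /
                (kap n * (t - 1) ^ 2)) ^ (1 / (2 * qex n))) :=
  constant_barriers_general n hn t γ η μ ht d hd ψ hψ
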